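/- Let A be a trim permutation DFA with at least one accepting state and at least one rejecting state. If the number of states of A is a prime number, then A is prime (i.e., A is not composite). -/

import Mathlib

open Set

/-- A DFA bundled with a finite state type. -/
structure FinDFA (α : Type) : Type 1 where
  σ : Type
  [fin : Finite σ]
  M : DFA α σ

attribute [instance] FinDFA.fin

/-- The number of states of a bundled DFA. -/
noncomputable def FinDFA.card {α : Type} (B : FinDFA α) : ℕ := Nat.card B.σ

/-- The language of a bundled DFA. -/
def FinDFA.accepts {α : Type} (B : FinDFA α) : Language α := B.M.accepts

/-- `l` is a decomposition of `A`: every member has fewer states than `A`,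
and the language of `A` is the intersection of the languages of the members. -/
def IsDecomposition {α Q : Type} (A : DFA α Q) (l : List (FinDFA α)) : Prop :=
  (∀ B ∈ l, B.card < Nat.card Q) ∧
    ∀ w : List α, w ∈ A.accepts ↔ ∀ B ∈ l, w ∈ B.accepts

/-- `A` is composite if it has a decomposition. -/
def CompositeDFA {α Q : Type} (A : DFA α Q) : Prop :=
  ∃ l : List (FinDFA α), IsDecomposition A l

/-- `A` is `k`-factor composite if it has a decomposition with at most `k` factors. -/
def IsKFactorComposite {α Q : Type} (A : DFA α Q) (k : ℕ) : Prop :=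
  ∃ l : List (FinDFA α), l.length ≤ k ∧ IsDecomposition A l

/-- The width of `A`: the least number of factors in a decomposition of `A`. -/
noncomputable def DFAwidth {α Q : Type} (A : DFA α Q) : ℕ :=
  sInf {k : ℕ | ∃ l : List (FinDFA α), l.length = k ∧ IsDecomposition A l}

/-- `B` is a factor of `A` if it is a member of some decomposition of `A`. -/
def IsFactor {α Q : Type} (A : DFA α Q) (B : FinDFA α) : Prop :=
  ∃ l : List (FinDFA α), B ∈ l ∧ IsDecomposition A l

/-- `A` is trim: every state is reachable from the initial state. -/
def Trim {α Q : Type} (A : DFA α Q) : Prop :=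
  ∀ q : Q, ∃ w : List α, A.eval w = q

/-- `A` is a permutation DFA: every letter acts bijectively on the states. -/
def IsPermutationDFA {α Q : Type} (A : DFA α Q) : Prop :=
  ∀ a : α, Function.Bijective fun q => A.step q a

/-- `A` is commutative. -/
def CommutativeDFA {α Q : Type} (A : DFA α Q) : Prop :=
  ∀ (q : Q) (u v : List α), A.evalFrom q (u ++ v) = A.evalFrom q (v ++ u)

/-- The image of a set of states under the action of a word. -/
def wordImage {α Q : Type} (A : DFA α Q) (U : Set Q) (w : List α) : Set Q :=
  (fun q => A.evalFrom q w) '' U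

/-- The orbit of a set of states: all images of it under words. -/
def orbitOf {α Q : Type} (A : DFA α Q) (U : Set Q) : Set (Set Q) :=
  {V | ∃ w : List α, V = wordImage A U w}

/-- The orbit-DFA `A^U`. Its states are the members of the orbit of `U`, its initial
state is `U`, and its accepting states are the members of the orbit that meet the
accepting states of `A`. -/
def orbitDFA {α Q : Type} (A : DFA α Q) (U : Set Q) : DFA α (orbitOf A U) where
  step V a := ⟨(fun q => A.step q a) '' V.1, by
    obtain ⟨w, hw⟩ := V.2
    exact ⟨w ++ [a], by
      simp [wordImage, hw, Set.image_image, DFA.evalFrom_append_singleton]⟩⟩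
  start := ⟨U, ⟨[], by simp [wordImage]⟩⟩
  accept := {V | (V.1 ∩ A.accept).Nonempty}

/-- The orbit-DFA `A^U` covers a rejecting state `q` of `A` if it is smaller than `A`
and one of its states contains `q` and no accepting state of `A`. -/
def OrbitCovers {α Q : Type} (A : DFA α Q) (U : Set Q) (q : Q) : Prop :=
  Nat.card (orbitOf A U) < Nat.card Q ∧ ∃ V ∈ orbitOf A U, q ∈ V ∧ V ∩ A.accept = ∅

/-- The `k`-th power of a word. -/
def wpow {α : Type} (u : List α) : ℕ → List α
  | 0 => []
  | k + 1 => u ++ wpow u k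

/-- The word `u` covers the rejecting state `q`: `u` moves `q`, and all states reached
from `q` by iterating `u` are rejecting. -/
def WordCovers {α Q : Type} (A : DFA α Q) (u : List α) (q : Q) : Prop :=
  A.evalFrom q u ≠ q ∧ ∀ k : ℕ, A.evalFrom q (wpow u k) ∉ A.accept

/-- `A` is decomposable into its orbit-DFAs. -/
def OrbitDecomposable {α Q : Type} (A : DFA α Q) : Prop :=
  ∃ Us : List (Set Q),
    (∀ U ∈ Us, A.start ∈ U ∧ Nat.card (orbitOf A U) < Nat.card Q) ∧
    ∀ w : List α, w ∈ A.accepts ↔ ∀ U ∈ Us, w ∈ (orbitDFA A U).accepts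

section Aux

variable {α Q : Type}

lemma evalFrom_bij (A : DFA α Q) (hperm : IsPermutationDFA A) (w : List α) :
    Function.Bijective (fun q => A.evalFrom q w) := by
  induction w with
  | nil => exact Function.bijective_id
  | cons a w ih =>
      have h : (fun q => A.evalFrom q (a :: w))
          = (fun q => A.evalFrom q w) ∘ (fun q => A.step q a) := rfl
      rw [h]; exact ih.comp (hperm a)

noncomputable def wperm (A : DFA α Q) (hperm : IsPermutationDFA A) (w : List α) :
    Equiv.Perm Q :=
  Equiv.ofBijective _ (evalFrom_bij A hperm w)

lemma wperm_apply (A : DFA α Q) (hperm : IsPermutationDFA A) (w : List α) (q : Q) :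
    wperm A hperm w q = A.evalFrom q w := rfl

lemma wperm_nil (A : DFA α Q) (hperm : IsPermutationDFA A) :
    wperm A hperm [] = 1 := by ext q; rfl

lemma wperm_append (A : DFA α Q) (hperm : IsPermutationDFA A) (u v : List α) :
    wperm A hperm (u ++ v) = wperm A hperm v * wperm A hperm u := by
  ext q
  simp [wperm_apply, DFA.evalFrom_of_append]

lemma wperm_wpow (A : DFA α Q) (hperm : IsPermutationDFA A) (u : List α) (k : ℕ) :
    wperm A hperm (wpow u k) = (wperm A hperm u) ^ k := by
  induction k with
  | zero => simpa [wpow] using wperm_nil A hperm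
  | succ k ih => rw [wpow, wperm_append, ih, ← pow_succ]

noncomputable def wgroup (A : DFA α Q) [Finite Q] (hperm : IsPermutationDFA A) :
    Subgroup (Equiv.Perm Q) where
  carrier := Set.range (wperm A hperm)
  one_mem' := ⟨[], wperm_nil A hperm⟩
  mul_mem' := by rintro x y ⟨u, rfl⟩ ⟨v, rfl⟩; exact ⟨v ++ u, wperm_append A hperm v u⟩
  inv_mem' := by
    rintro x ⟨u, rfl⟩
    set π := wperm A hperm u with hπ
    have hpos : 0 < orderOf π := orderOf_pos π
    refine ⟨wpow u (orderOf π - 1), ?_⟩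
    rw [wperm_wpow]
    refine (inv_eq_of_mul_eq_one_right ?_).symm
    rw [← pow_succ', Nat.sub_add_cancel hpos, pow_orderOf_eq_one]

end Aux

section Cycle

variable {α Q : Type}

lemma orbit_card_dvd {G : Type*} {β : Type*} [Group G] [Finite G] [MulAction G β] (b : β) :
    Nat.card (MulAction.orbit G b) ∣ Nat.card G := by
  have := Fintype.ofFinite G
  haveI : Finite (MulAction.orbit G b) := (Set.finite_range fun g : G => g • b).to_subtype
  have := Fintype.ofFinite (MulAction.orbit G b)
  have := Fintype.ofFinite (MulAction.stabilizer G b)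
  rw [Nat.card_eq_fintype_card, Nat.card_eq_fintype_card]
  exact ⟨_, (MulAction.card_orbit_mul_card_stabilizer_eq_card_group (G := G) b).symm⟩

lemma exists_cycle (A : DFA α Q) [Finite Q] (htrim : Trim A) (hperm : IsPermutationDFA A)
    (hprime : (Nat.card Q).Prime) :
    ∃ u : List α, orderOf (wperm A hperm u) = Nat.card Q ∧
      ∀ q : Q, ∃ j : ℕ, ((wperm A hperm u) ^ j) A.start = q := by
  set p := Nat.card Q with hp
  set G := wgroup A hperm with hG
  -- the orbit of the start state under G is everything
  have horb : MulAction.orbit G A.start = Set.univ := by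
    apply Set.eq_univ_of_forall
    intro q
    obtain ⟨w, hw⟩ := htrim q
    exact ⟨⟨wperm A hperm w, ⟨w, rfl⟩⟩, hw⟩
  have hdvd : p ∣ Nat.card G := by
    have h1 : Nat.card (MulAction.orbit G A.start) = p := by
      rw [horb, Nat.card_coe_set_eq, Set.ncard_univ]
    rw [← h1]
    exact orbit_card_dvd A.start
  haveI : Fact p.Prime := ⟨hprime⟩
  have := Fintype.ofFinite ↥G
  obtain ⟨g, hg⟩ := exists_prime_orderOf_dvd_card (G := ↥G) p (by rwa [← Nat.card_eq_fintype_card])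
  obtain ⟨u, hu⟩ := g.2
  have hordπ : orderOf (wperm A hperm u) = p := by
    rw [hu, Subgroup.orderOf_coe]; exact hg
  refine ⟨u, hordπ, ?_⟩
  set π := wperm A hperm u with hπ
  have hπne : π ≠ 1 := by
    intro h; rw [h, orderOf_one] at hordπ; exact hprime.ne_one hordπ.symm
  have : ∃ q0 : Q, π q0 ≠ q0 := by
    by_contra h
    push_neg at h
    exact hπne (Equiv.ext h)
  obtain ⟨q0, hq0⟩ := this
  have hcardH : Nat.card (Subgroup.zpowers π) = p := (Nat.card_zpowers π).trans hordπ
  -- the orbit of q0 under H is everything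
  have horbH : MulAction.orbit (Subgroup.zpowers π) q0 = Set.univ := by
    have hdvd2 : Nat.card (MulAction.orbit (Subgroup.zpowers π) q0) ∣ p := hcardH ▸ orbit_card_dvd q0
    rcases (Nat.Prime.eq_one_or_self_of_dvd hprime _ hdvd2) with h1 | h1
    · exfalso
      rw [Nat.card_eq_one_iff_unique] at h1
      have m1 : q0 ∈ MulAction.orbit (Subgroup.zpowers π) q0 := MulAction.mem_orbit_self q0
      have m2 : π q0 ∈ MulAction.orbit (Subgroup.zpowers π) q0 :=
        ⟨⟨π, Subgroup.mem_zpowers π⟩, rfl⟩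
      have := h1.1.allEq ⟨q0, m1⟩ ⟨π q0, m2⟩
      exact hq0 (congrArg Subtype.val this).symm
    · have hfin : (Set.univ : Set Q).Finite := Set.finite_univ
      apply Set.eq_of_subset_of_ncard_le (Set.subset_univ _) _ hfin
      have h2 : (MulAction.orbit (Subgroup.zpowers π) q0).ncard = Nat.card Q := by
        rw [← Nat.card_coe_set_eq, h1]
      rw [Set.ncard_univ, h2]
  intro q
  have hstart : A.start ∈ MulAction.orbit (Subgroup.zpowers π) q0 := horbH ▸ Set.mem_univ _
  have hq : q ∈ MulAction.orbit (Subgroup.zpowers π) q0 := horbH ▸ Set.mem_univ _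
  obtain ⟨h1, hh1⟩ := hstart
  obtain ⟨h2, hh2⟩ := hq
  have hmem : ((h2 * h1⁻¹ : Subgroup.zpowers π) : Equiv.Perm Q) ∈ Submonoid.powers π := by
    rw [mem_powers_iff_mem_zpowers]
    exact (h2 * h1⁻¹).2
  obtain ⟨n, hn⟩ := hmem
  have hn' : π ^ n = ((h2 * h1⁻¹ : Subgroup.zpowers π) : Equiv.Perm Q) := hn
  refine ⟨n, ?_⟩
  have hkey : (h2 * h1⁻¹ : Subgroup.zpowers π) • A.start = q := by
    rw [← hh1, ← hh2, smul_smul]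
    congr 1
    group
  rw [hn']
  exact hkey

end Cycle

section Pigeon

lemma evalFrom_wpow {α S : Type} (B : DFA α S) (u : List α) (k : ℕ) (s : S) :
    B.evalFrom s (wpow u k) = (fun t => B.evalFrom t u)^[k] s := by
  induction k generalizing s with
  | zero => rfl
  | succ k ih =>
      show B.evalFrom s (u ++ wpow u k) = _
      rw [DFA.evalFrom_of_append, ih, Function.iterate_succ_apply]

lemma exists_period {S : Type} [Finite S] (f : S → S) (s0 : S) (p : ℕ)
    (hcard : Nat.card S < p) :
    ∃ t d : ℕ, 0 < d ∧ d < p ∧ t < p ∧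
      ∀ m, t ≤ m → ∀ k, f^[m + d * k] s0 = f^[m] s0 := by
  have hni : ¬ Function.Injective (fun i : Fin (Nat.card S + 1) => f^[i] s0) := by
    intro hinj
    have := Nat.card_le_card_of_injective _ hinj
    simp only [Nat.card_eq_fintype_card, Fintype.card_fin] at this
    omega
  rw [Function.not_injective_iff] at hni
  obtain ⟨i, j, hij, hne⟩ := hni
  obtain ⟨a, b, hab, hba, heq⟩ : ∃ a b : ℕ, a < b ∧ b ≤ Nat.card S ∧ f^[a] s0 = f^[b] s0 := by
    rcases lt_or_gt_of_ne (Fin.val_ne_of_ne hne) with hlt | hlt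
    · exact ⟨i, j, hlt, Nat.lt_succ_iff.mp j.isLt, hij⟩
    · exact ⟨j, i, hlt, Nat.lt_succ_iff.mp i.isLt, hij.symm⟩
  refine ⟨a, b - a, by omega, by omega, by omega, ?_⟩
  have hstep : ∀ m, a ≤ m → f^[m + (b - a)] s0 = f^[m] s0 := by
    intro m hm
    obtain ⟨c, rfl⟩ := Nat.exists_eq_add_of_le hm
    have h1 : a + c + (b - a) = b + c := by omega
    rw [h1, Nat.add_comm b c, Function.iterate_add_apply, ← heq,
      ← Function.iterate_add_apply, Nat.add_comm c a]
  intro m hm k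
  induction k with
  | zero => simp
  | succ k ih =>
      have h2 : m + (b - a) * (k + 1) = (m + (b - a) * k) + (b - a) := by ring
      rw [h2, hstep _ (by omega), ih]

end Pigeon

theorem main_aux {α Q : Type} [Finite Q] (A : DFA α Q)
    (htrim : Trim A) (hperm : IsPermutationDFA A)
    (hacc : A.accept.Nonempty) (hrej : ∃ q : Q, q ∉ A.accept)
    (hprime : (Nat.card Q).Prime)
    (l : List (FinDFA α))
    (hlt : ∀ B ∈ l, Nat.card B.σ < Nat.card Q)
    (hiff : ∀ w : List α, w ∈ A.accepts ↔ ∀ B ∈ l, w ∈ B.M.accepts) : False := by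
  haveI : Fact (Nat.card Q).Prime := ⟨hprime⟩
  haveI : NeZero (Nat.card Q) := ⟨hprime.pos.ne'⟩
  obtain ⟨u, hord, hsurj⟩ := exists_cycle A htrim hperm hprime
  set π := wperm A hperm u with hπ
  obtain ⟨qa, hqa⟩ := hacc
  obtain ⟨qr, hqr⟩ := hrej
  obtain ⟨ja, hja⟩ := hsurj qa
  obtain ⟨jr, hjr⟩ := hsurj qr
  have hev : ∀ j : ℕ, A.eval (wpow u j) = (π ^ j) A.start := by
    intro j
    show A.evalFrom A.start (wpow u j) = _
    rw [← wperm_apply A hperm, wperm_wpow]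
  have hmod : ∀ j j' : ℕ, (j : ZMod (Nat.card Q)) = (j' : ZMod (Nat.card Q)) →
      (π ^ j) A.start = (π ^ j') A.start := by
    intro j j' h
    rw [ZMod.natCast_eq_natCast_iff'] at h
    have e1 : π ^ (j % Nat.card Q) = π ^ j := by
      rw [← hord]; exact pow_mod_orderOf π j
    have e2 : π ^ (j' % Nat.card Q) = π ^ j' := by
      rw [← hord]; exact pow_mod_orderOf π j'
    rw [← e1, ← e2, h]
  set jR := jr + Nat.card Q with hjR
  have hevR : A.eval (wpow u jR) = qr := by
    rw [hev, hmod jR jr (by push_cast [hjR]; simp), hjr]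
  have hrejR : wpow u jR ∉ A.accepts := by
    rw [DFA.mem_accepts, hevR]; exact hqr
  have hex : ¬ ∀ B ∈ l, wpow u jR ∈ B.M.accepts := fun h => hrejR ((hiff _).2 h)
  push_neg at hex
  obtain ⟨B, hBl, hBrej⟩ := hex
  have hBcard : Nat.card B.σ < Nat.card Q := hlt B hBl
  set f := fun s => B.M.evalFrom s u with hf
  obtain ⟨t, d, hd0, hdp, htp, hper⟩ := exists_period f B.M.start (Nat.card Q) hBcard
  have hBev : ∀ j : ℕ, B.M.eval (wpow u j) = f^[j] B.M.start := fun j =>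
    evalFrom_wpow B.M u j B.M.start
  set s := (((ja : ZMod (Nat.card Q)) - (jR : ZMod (Nat.card Q))) / (d : ZMod (Nat.card Q))).val
    with hs
  set j := jR + d * s with hj
  have hdz : (d : ZMod (Nat.card Q)) ≠ 0 := by
    rw [Ne, ZMod.natCast_eq_zero_iff]
    intro hdvd
    have := Nat.le_of_dvd hd0 hdvd
    omega
  have hcast : ((s : ℕ) : ZMod (Nat.card Q))
      = ((ja : ZMod (Nat.card Q)) - (jR : ZMod (Nat.card Q))) / (d : ZMod (Nat.card Q)) := by
    rw [hs, ZMod.natCast_val, ZMod.cast_id]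
  have hjmod : ((j : ℕ) : ZMod (Nat.card Q)) = ((ja : ℕ) : ZMod (Nat.card Q)) := by
    rw [hj]; push_cast; rw [hcast, mul_comm, div_mul_cancel₀ _ hdz]; ring
  have hacc_j : wpow u j ∈ A.accepts := by
    rw [DFA.mem_accepts, hev, hmod j ja hjmod, hja]; exact hqa
  have hBacc : wpow u j ∈ B.M.accepts := (hiff _).1 hacc_j B hBl
  have hBeq : B.M.eval (wpow u j) = B.M.eval (wpow u jR) := by
    rw [hBev, hBev, hj]
    exact hper jR (by omega) s
  apply hBrej
  rw [DFA.mem_accepts] at hBacc ⊢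
  rw [← hBeq]
  exact hBacc

/-- A trim permutation DFA with at least one accepting state and at least one
rejecting state whose number of states is prime, is prime (not composite). -/
theorem prime_card_is_prime {α Q : Type} [Finite Q] (A : DFA α Q)
    (htrim : Trim A) (hperm : IsPermutationDFA A)
    (hacc : A.accept.Nonempty) (hrej : ∃ q : Q, q ∉ A.accept)
    (hprime : (Nat.card Q).Prime) :
    ¬ CompositeDFA A := by
  rintro ⟨l, hlt, hiff⟩
  exact main_aux A htrim hperm hacc hrej hprime l hlt hiff
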